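/- Let q be a 2way-determined query that is a clique-query. Then for every database D: D ⊨ certain(q) if and only if the bipartite graph H(D,q) admits no matching saturating the set of blocks of D. -/

import Mathlib

/- Consistent query answering framework: a single relation symbol of arity `n`
   whose first `l` positions form the primary key. Facts are `Fin n → Elem`,
   atoms are `Fin n → Var`. -/

namespace CQA

/-- Key-equality: the tuples of the first `l` entries coincide. -/
def keyEq (l : ℕ) {n : ℕ} {α : Type*} (s t : Fin n → α) : Prop :=
  ∀ i : Fin n, (i : ℕ) < l → s i = t i

/-- The set of entries occurring in the first `l` (key) positions of a tuple. -/
def keySet (l : ℕ) {n : ℕ} {α : Type*} (t : Fin n → α) : Set α :=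
  {x | ∃ i : Fin n, (i : ℕ) < l ∧ t i = x}

/-- The set of all entries of a tuple. -/
def varsSet {n : ℕ} {α : Type*} (t : Fin n → α) : Set α :=
  Set.range t

/-- A (two-atom, Boolean, self-join) query `q = AB` is a pair of atoms. -/
abbrev Query (n : ℕ) (Var : Type*) := (Fin n → Var) × (Fin n → Var)

variable {n : ℕ} {Elem Var : Type*}

/-- The pair of facts `(a, b)` matches the two atoms of `q` via a single assignment `μ`. -/
def solPair (q : Query n Var) (a b : Fin n → Elem) : Prop :=
  ∃ μ : Var → Elem, (∀ i, μ (q.1 i) = a i) ∧ (∀ i, μ (q.2 i) = b i)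

/-- `D ⊨ q(ab)` : `(a,b)` is a solution to `q` in `D`. -/
def Sol (q : Query n Var) (D : Set (Fin n → Elem)) (a b : Fin n → Elem) : Prop :=
  a ∈ D ∧ b ∈ D ∧ solPair q a b

/-- `D ⊨ q{ab}` : `(a,b)` or `(b,a)` is a solution to `q` in `D`. -/
def SolSym (q : Query n Var) (D : Set (Fin n → Elem)) (a b : Fin n → Elem) : Prop :=
  Sol q D a b ∨ Sol q D b a

/-- The set `q(D)` of solutions to `q` in `D`. -/
def solSet (q : Query n Var) (D : Set (Fin n → Elem)) :
    Set ((Fin n → Elem) × (Fin n → Elem)) :=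
  {p | Sol q D p.1 p.2}

/-- `D ⊨ q` : some solution to `q` exists in `D`. -/
def Sat (q : Query n Var) (D : Set (Fin n → Elem)) : Prop :=
  ∃ a b, Sol q D a b

/-- A database is consistent if it contains no two distinct key-equal facts. -/
def Consistent (l : ℕ) (D : Set (Fin n → Elem)) : Prop :=
  ∀ a ∈ D, ∀ b ∈ D, keyEq l a b → a = b

/-- `r` is a repair of `D` : a maximal consistent subset of `D`. -/
def Repair (l : ℕ) (D r : Set (Fin n → Elem)) : Prop :=
  r ⊆ D ∧ Consistent l r ∧ ∀ s, r ⊆ s → s ⊆ D → Consistent l s → s = r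

/-- `D ⊨ certain(q)` : all repairs of `D` satisfy `q`. -/
def Certain (l : ℕ) (q : Query n Var) (D : Set (Fin n → Elem)) : Prop :=
  ∀ r, Repair l D r → Sat q r

/-- The block of the fact `a` in `D`: all facts of `D` key-equal to `a`. -/
def Block (l : ℕ) (D : Set (Fin n → Elem)) (a : Fin n → Elem) : Set (Fin n → Elem) :=
  {b ∈ D | keyEq l a b}

/-- A `k`-set of `D`: at most `k` facts of `D`, at most one from each block. -/
def kSet (l k : ℕ) (D S : Set (Fin n → Elem)) : Prop :=
  S ⊆ D ∧ S.Finite ∧ S.ncard ≤ k ∧ Consistent l S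

/-- A collection `𝒮` of sets of facts is closed under the two rules defining `Δ_k(q,D)`:
  (i) every `k`-set satisfying `q` is in `𝒮`, and (ii) if for a `k`-set `S` there is
  a block of `D` each of whose facts `u` admits a subset `S' ⊆ S ∪ {u}` that is a
  `k`-set belonging to `𝒮`, then `S ∈ 𝒮`. -/
def DeltaClosed (l k : ℕ) (q : Query n Var) (D : Set (Fin n → Elem))
    (𝒮 : Set (Set (Fin n → Elem))) : Prop :=
  (∀ S, kSet l k D S → Sat q S → S ∈ 𝒮) ∧
  (∀ S, kSet l k D S → (∃ x ∈ D, ∀ u ∈ D, keyEq l x u →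
      ∃ S', S' ⊆ S ∪ {u} ∧ kSet l k D S' ∧ S' ∈ 𝒮) → S ∈ 𝒮)

/-- `Δ_k(q,D)`: the least collection of `k`-sets of `D` closed under the two rules
(the intersection of all closed collections). -/
def Delta (l k : ℕ) (q : Query n Var) (D : Set (Fin n → Elem)) :
    Set (Set (Fin n → Elem)) :=
  ⋂₀ {𝒮 | DeltaClosed l k q D 𝒮}

/-- `q = AB` is 2way-determined. -/
def TwoWayDet (l : ℕ) (q : Query n Var) : Prop :=
  ¬ keySet l q.1 ⊆ keySet l q.2 ∧ ¬ keySet l q.2 ⊆ keySet l q.1 ∧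
  keySet l q.1 ⊆ varsSet q.2 ∧ keySet l q.2 ⊆ varsSet q.1

/-- The zig-zag property of a query `q`, relative to databases over `Elem`. -/
def ZigZag (l : ℕ) (q : Query n Var) (Elem : Type*) : Prop :=
  ∀ D : Set (Fin n → Elem), D.Finite →
    ∀ a b b' c : Fin n → Elem, a ∈ D → b ∈ D → b' ∈ D → c ∈ D →
      ¬ keyEq l a c → a ≠ b → keyEq l b b' →
      Sol q D a b → Sol q D c b' → Sol q D a b'

/-- `rkey(a, r)`: facts of `r` whose key entries are included in those of `a`. -/
def rkey (l : ℕ) (r : Set (Fin n → Elem)) (a : Fin n → Elem) : Set (Fin n → Elem) :=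
  {c ∈ r | keySet l c ⊆ keySet l a}

open Classical in
/-- `g(e)`, the set of entries of the tuple `g̅(e)`, for `e` branching with `d, f`. -/
noncomputable def gSet (l : ℕ) (d e f : Fin n → Elem) : Set Elem :=
  if keySet l d ⊆ keySet l e ∧ ¬ keySet l f ⊆ keySet l e then keySet l d
  else if ¬ keySet l d ⊆ keySet l e ∧ keySet l f ⊆ keySet l e then keySet l f
  else if keySet l d ⊆ keySet l f ∧ keySet l f ⊆ keySet l e then keySet l d
  else if keySet l f ⊆ keySet l d ∧ keySet l d ⊆ keySet l e then keySet l f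
  else keySet l e

/-- A tripath of `q`: a database `Θ`, each of whose blocks has at most two facts,
whose blocks (indexed by `Fin m`) are arranged as a rooted tree with exactly one root
block and exactly two leaf blocks; the root block has the single fact `a(root)`, leaf
blocks have the single fact `b(leaf)`, all other blocks have exactly the two facts
`a(B) ≠ b(B)`; if `B` is the parent of `B'` then `Θ ⊨ q{a(B) b(B')}`; the (unique)
branching block `B` with its two children `B', B''` gives the center `d e f` =
`b(B') a(B) b(B'')` with `(d,e)` and `(e,f)` distinct solutions; and `g(e)` is not
included in the key of the root fact nor of either leaf fact. -/
structure Tripath (l : ℕ) (q : Query n Var) (Θ : Set (Fin n → Elem)) where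
  finite : Θ.Finite
  m : ℕ
  blk : Fin m → Set (Fin n → Elem)
  blk_is_block : ∀ i, ∃ x ∈ Θ, blk i = Block l Θ x
  blk_cover : Θ = ⋃ i, blk i
  blk_inj : Function.Injective blk
  blk_card : ∀ i, (blk i).ncard ≤ 2
  parent : Fin m → Option (Fin m)
  root : Fin m
  parent_root : parent root = none
  parent_ne_root : ∀ i, i ≠ root → ∃ j, parent i = some j
  reach_root : ∀ i, Relation.ReflTransGen (fun x y => parent x = some y) i root
  leaf1 : Fin m
  leaf2 : Fin m
  leaf_ne : leaf1 ≠ leaf2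
  leaf1_leaf : ∀ j, parent j ≠ some leaf1
  leaf2_leaf : ∀ j, parent j ≠ some leaf2
  leaves_eq : ∀ i, (∀ j, parent j ≠ some i) → i = leaf1 ∨ i = leaf2
  aFact : Fin m → (Fin n → Elem)
  bFact : Fin m → (Fin n → Elem)
  root_blk : blk root = {aFact root}
  leaf1_blk : blk leaf1 = {bFact leaf1}
  leaf2_blk : blk leaf2 = {bFact leaf2}
  other_blk : ∀ i, i ≠ root → i ≠ leaf1 → i ≠ leaf2 →
    aFact i ≠ bFact i ∧ blk i = {aFact i, bFact i}
  adj_sol : ∀ i j, parent j = some i → SolSym q Θ (aFact i) (bFact j)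
  branch : Fin m
  child1 : Fin m
  child2 : Fin m
  child_ne : child1 ≠ child2
  parent_child1 : parent child1 = some branch
  parent_child2 : parent child2 = some branch
  center_sol1 : Sol q Θ (bFact child1) (aFact branch)
  center_sol2 : Sol q Θ (aFact branch) (bFact child2)
  center_distinct : (bFact child1, aFact branch) ≠ (aFact branch, bFact child2)
  g_root : ¬ gSet l (bFact child1) (aFact branch) (bFact child2) ⊆ keySet l (aFact root)
  g_leaf1 : ¬ gSet l (bFact child1) (aFact branch) (bFact child2) ⊆ keySet l (bFact leaf1)
  g_leaf2 : ¬ gSet l (bFact child1) (aFact branch) (bFact child2) ⊆ keySet l (bFact leaf2)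

namespace Tripath

variable {l : ℕ} {q : Query n Var} {Θ : Set (Fin n → Elem)}

/-- The fact `d` of the center `def` of a tripath. -/
def dc (T : Tripath l q Θ) : Fin n → Elem := T.bFact T.child1
/-- The fact `e` of the center `def` of a tripath. -/
def ec (T : Tripath l q Θ) : Fin n → Elem := T.aFact T.branch
/-- The fact `f` of the center `def` of a tripath. -/
def fc (T : Tripath l q Θ) : Fin n → Elem := T.bFact T.child2
/-- The root fact `u₀` of a tripath. -/
def u0 (T : Tripath l q Θ) : Fin n → Elem := T.aFact T.root
/-- The leaf fact `u₁` of a tripath. -/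
def u1 (T : Tripath l q Θ) : Fin n → Elem := T.bFact T.leaf1
/-- The leaf fact `u₂` of a tripath. -/
def u2 (T : Tripath l q Θ) : Fin n → Elem := T.bFact T.leaf2

/-- The center of the tripath is a fork (`(f,d)` is not a solution). -/
def IsFork (T : Tripath l q Θ) : Prop := ¬ Sol q Θ T.fc T.dc

/-- The center of the tripath is a triangle (`(f,d)` is a solution). -/
def IsTriangle (T : Tripath l q Θ) : Prop := Sol q Θ T.fc T.dc

/-- Variable-niceness witnessed by the elements `x, y, z`. -/
def VariableNiceWith (T : Tripath l q Θ) (x y z : Elem) : Prop :=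
  x ∈ keySet l T.dc ∧ y ∈ keySet l T.ec ∧ z ∈ keySet l T.fc ∧
  ({x, y, z} : Set Elem) ∩ (keySet l T.u0 ∪ keySet l T.u1 ∪ keySet l T.u2) = ∅

/-- The tripath is variable-nice. -/
def VariableNice (T : Tripath l q Θ) : Prop := ∃ x y z, T.VariableNiceWith x y z

/-- The tripath is solution-nice: the only solutions to `q` in `Θ` are those between a
parent block and a child block, plus possibly `(f, d)`. -/
def SolutionNice (T : Tripath l q Θ) : Prop :=
  ∀ a b, Sol q Θ a b →
    (∃ i j, T.parent j = some i ∧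
      ((a = T.aFact i ∧ b = T.bFact j) ∨ (a = T.bFact j ∧ b = T.aFact i)))
    ∨ (a = T.fc ∧ b = T.dc)

/-- The tripath is nice. -/
def Nice (T : Tripath l q Θ) : Prop :=
  (∃ x y z : Elem, T.VariableNiceWith x y z ∧
    ∃ w ∈ ({x, y, z} : Set Elem),
      ∀ c ∈ Θ, c ≠ T.u0 → c ≠ T.u1 → c ≠ T.u2 → w ∈ keySet l c) ∧
  T.SolutionNice ∧
  (∀ u ∈ ({T.u0, T.u1, T.u2} : Set (Fin n → Elem)),
    ∃ w ∈ keySet l u, ∀ c ∈ Θ, c ≠ u → w ∉ keySet l c)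

end Tripath

/-- `D` contains a tripath of `q`: some subset of `D` is a tripath of `q`. -/
def ContainsTripath (l : ℕ) (q : Query n Var) (D : Set (Fin n → Elem)) : Prop :=
  ∃ Θ ⊆ D, Nonempty (Tripath l q Θ)

/-- `q` admits a fork-tripath (over databases with elements in `Elem`). -/
def AdmitsForkTripath (l : ℕ) (q : Query n Var) (Elem : Type*) : Prop :=
  ∃ D : Set (Fin n → Elem), D.Finite ∧ ∃ Θ ⊆ D, ∃ T : Tripath l q Θ, T.IsFork

/-- `q` admits a triangle-tripath (over databases with elements in `Elem`). -/
def AdmitsTriangleTripath (l : ℕ) (q : Query n Var) (Elem : Type*) : Prop :=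
  ∃ D : Set (Fin n → Elem), D.Finite ∧ ∃ Θ ⊆ D, ∃ T : Tripath l q Θ, T.IsTriangle

/-- `q` admits a tripath (over databases with elements in `Elem`). -/
def AdmitsTripath (l : ℕ) (q : Query n Var) (Elem : Type*) : Prop :=
  ∃ D : Set (Fin n → Elem), D.Finite ∧ ContainsTripath l q D

/-- Edges of the solution graph `G(D,q)`: distinct facts `a, b` of `D` with `D ⊨ q{ab}`. -/
def gEdge (q : Query n Var) (D : Set (Fin n → Elem)) (a b : Fin n → Elem) : Prop :=
  a ≠ b ∧ a ∈ D ∧ b ∈ D ∧ SolSym q D a b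

/-- The connected component of the fact `a` in the solution graph `G(D,q)`. -/
def gComp (q : Query n Var) (D : Set (Fin n → Elem)) (a : Fin n → Elem) :
    Set (Fin n → Elem) :=
  {b ∈ D | Relation.ReflTransGen (gEdge q D) a b}

/-- `C` is a quasi-clique (of the solution graph of `D`): any two non-key-equal facts of
`C` are joined by an edge. -/
def QuasiClique (l : ℕ) (q : Query n Var) (D : Set (Fin n → Elem))
    (C : Set (Fin n → Elem)) : Prop :=
  ∀ a ∈ C, ∀ b ∈ C, ¬ keyEq l a b → SolSym q D a b

open Classical in
/-- `clique(a)`: the connected component of `a` in `G(D,q)` if it is a quasi-clique, and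
`{a}` otherwise. -/
noncomputable def cliqueOf (l : ℕ) (q : Query n Var) (D : Set (Fin n → Elem))
    (a : Fin n → Elem) : Set (Fin n → Elem) :=
  if QuasiClique l q D (gComp q D a) then gComp q D a else {a}

/-- Edges of the bipartite graph `H(D,q)`: between a block `B` of `D` and a set `c` of
the form `clique(y)`, when `B` contains a fact `a ∈ c` with `(a,a)` not a solution. -/
def HEdge (l : ℕ) (q : Query n Var) (D : Set (Fin n → Elem))
    (B c : Set (Fin n → Elem)) : Prop :=
  (∃ x ∈ D, B = Block l D x) ∧ (∃ y ∈ D, c = cliqueOf l q D y) ∧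
  ∃ a ∈ B, a ∈ c ∧ ¬ Sol q D a a

/-- `H(D,q)` admits a matching saturating the set `V₁` of blocks of `D`: an injective
assignment of an `H`-edge to every block. -/
def SaturatingMatching (l : ℕ) (q : Query n Var) (D : Set (Fin n → Elem)) : Prop :=
  ∃ M : Set (Fin n → Elem) → Set (Fin n → Elem),
    (∀ x ∈ D, HEdge l q D (Block l D x) (M (Block l D x))) ∧
    (∀ x ∈ D, ∀ y ∈ D, M (Block l D x) = M (Block l D y) → Block l D x = Block l D y)

/-- `D` is a clique-database for `q`: every connected component of `G(D,q)` is a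
quasi-clique. -/
def CliqueDB (l : ℕ) (q : Query n Var) (D : Set (Fin n → Elem)) : Prop :=
  ∀ a ∈ D, QuasiClique l q D (gComp q D a)

/-- `q` is a clique-query: every database (over `Elem`) is a clique-database for `q`. -/
def CliqueQuery (l : ℕ) (q : Query n Var) (Elem : Type*) : Prop :=
  ∀ D : Set (Fin n → Elem), D.Finite → CliqueDB l q D

/-- One step of `q`-connectedness between (the blocks of) two facts of `D`:
either they are in the same block, or some fact of the block of `x` and some fact
of the block of `y` form a solution. -/
def qConnRel (l : ℕ) (q : Query n Var) (D : Set (Fin n → Elem))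
    (x y : Fin n → Elem) : Prop :=
  keyEq l x y ∨ ∃ a b, a ∈ Block l D x ∧ b ∈ Block l D y ∧ SolSym q D a b

/-- The blocks of `x` and of `y` are `q`-connected in `D`
(reflexive-symmetric-transitive closure). -/
def qConn (l : ℕ) (q : Query n Var) (D : Set (Fin n → Elem))
    (x y : Fin n → Elem) : Prop :=
  Relation.EqvGen (qConnRel l q D) x y

/-- The `q`-connected component of (the block of) the fact `x` in `D`. -/
def qComponent (l : ℕ) (q : Query n Var) (D : Set (Fin n → Elem))
    (x : Fin n → Elem) : Set (Fin n → Elem) :=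
  {y ∈ D | qConn l q D x y}

end CQA

/-!
Both directions pass between a repair `r` and the assignment sending each block to the clique
of its fact in `r`. If `r` falsifies `q`, no fact of `r` is a self-solution and two facts of
`r` in one quasi-clique would be joined by a solution inside `r`, so this assignment is a
saturating matching. Conversely, choosing in every block a fact without self-solution in its
matched clique gives a repair; a solution `(a, b)` inside it puts `a` and `b` in one connected
component, which in a clique-database is the clique matched to both of their blocks, so `a`
and `b` lie in one block and coincide, contradicting `¬ q(aa)`.
-/

namespace CQA

variable {n : ℕ} {Elem Var : Type*} {l : ℕ} {q : Query n Var} {D r : Set (Fin n → Elem)}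
  {a b x y : Fin n → Elem}

lemma keyEq_refl (a : Fin n → Elem) : keyEq l a a := fun _ _ => rfl

lemma keyEq.symm (h : keyEq l a b) : keyEq l b a := fun i hi => (h i hi).symm

lemma keyEq.trans (h : keyEq l a b) (h' : keyEq l b x) : keyEq l a x :=
  fun i hi => (h i hi).trans (h' i hi)

lemma block_eq_of_keyEq (h : keyEq l x y) : Block l D x = Block l D y := by
  ext a
  exact ⟨fun ⟨ha, hk⟩ => ⟨ha, h.symm.trans hk⟩, fun ⟨ha, hk⟩ => ⟨ha, h.trans hk⟩⟩

lemma keyEq_of_block_eq (hy : y ∈ D) (h : Block l D x = Block l D y) : keyEq l x y :=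
  (h ▸ ⟨hy, keyEq_refl y⟩ : y ∈ Block l D x).2

lemma Sol.of_subset (ha : a ∈ r) (hb : b ∈ r) (h : Sol q D a b) : Sol q r a b :=
  ⟨ha, hb, h.2.2⟩

lemma repair_iff :
    Repair l D r ↔ r ⊆ D ∧ Consistent l r ∧ ∀ x ∈ D, ∃ a ∈ r, keyEq l x a := by
  refine ⟨fun ⟨hrD, hr, hmax⟩ => ⟨hrD, hr, fun x hx => ?_⟩, fun ⟨hrD, hr, hmeet⟩ => ?_⟩
  · by_contra! hno
    have hcons : Consistent l (r ∪ {x}) := by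
      rintro a (ha | rfl) b (hb | rfl) hab
      · exact hr a ha b hb hab
      · exact absurd hab.symm (hno a ha)
      · exact absurd hab (hno b hb)
      · rfl
    have hxr : x ∈ r :=
      hmax _ Set.subset_union_left (Set.union_subset hrD (by simpa using hx)) hcons ▸
        Set.mem_union_right r rfl
    exact hno x hxr (keyEq_refl x)
  · refine ⟨hrD, hr, fun s hrs hsD hs => (Set.Subset.antisymm · hrs) fun y hy => ?_⟩
    obtain ⟨a, ha, hya⟩ := hmeet y (hsD hy)
    exact hs y hy a (hrs ha) hya ▸ ha

lemma exists_repair_of_forall_block {P : (Fin n → Elem) → Prop}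
    (h : ∀ x ∈ D, ∃ a ∈ Block l D x, P a) : ∃ r, Repair l D r ∧ ∀ a ∈ r, P a := by
  have hblocks : ∀ B ∈ {B | ∃ x ∈ D, B = Block l D x}, ∃ a ∈ B, P a := by
    rintro _ ⟨x, hx, rfl⟩
    exact h x hx
  choose sel hsel_mem hsel_P using hblocks
  have sel_congr : ∀ {B B'} hB hB', B = B' → sel B hB = sel B' hB' := by
    rintro _ _ _ _ rfl
    rfl
  let r := {a | ∃ x, ∃ hx : x ∈ D, a = sel (Block l D x) ⟨x, hx, rfl⟩}
  refine ⟨r, repair_iff.2 ⟨?_, ?_, fun x hx => ⟨_, ⟨x, hx, rfl⟩,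
    (hsel_mem (Block l D x) ⟨x, hx, rfl⟩).2⟩⟩, ?_⟩
  · rintro _ ⟨x, hx, rfl⟩
    exact (hsel_mem (Block l D x) ⟨x, hx, rfl⟩).1
  · rintro _ ⟨x, hx, rfl⟩ _ ⟨y, hy, rfl⟩ hxy
    have hx' := (hsel_mem (Block l D x) ⟨x, hx, rfl⟩).2
    have hy' := (hsel_mem (Block l D y) ⟨y, hy, rfl⟩).2
    exact sel_congr _ _ (block_eq_of_keyEq ((hx'.trans hxy).trans hy'.symm))
  · rintro _ ⟨x, hx, rfl⟩
    exact hsel_P _ _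

instance : Std.Symm (gEdge q D) :=
  ⟨fun _ _ h => ⟨h.1.symm, h.2.2.1, h.2.1, h.2.2.2.symm⟩⟩

lemma self_mem_gComp (ha : a ∈ D) : a ∈ gComp q D a := ⟨ha, .refl⟩

lemma gComp_eq_of_mem (hb : b ∈ gComp q D a) : gComp q D a = gComp q D b := by
  ext c
  exact ⟨fun ⟨hc, h⟩ => ⟨hc, (Std.Symm.symm _ _ hb.2).trans h⟩,
    fun ⟨hc, h⟩ => ⟨hc, hb.2.trans h⟩⟩

lemma gComp_eq_of_solSym (h : SolSym q D a b) : gComp q D a = gComp q D b := by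
  have hb : b ∈ D := h.elim (·.2.1) (·.1)
  by_cases hab : a = b
  · rw [hab]
  · exact gComp_eq_of_mem ⟨hb, .single ⟨hab, h.elim (·.1) (·.2.1), hb, h⟩⟩

lemma self_mem_cliqueOf (ha : a ∈ D) : a ∈ cliqueOf l q D a := by
  unfold cliqueOf
  split_ifs
  exacts [self_mem_gComp ha, rfl]

lemma keyEq_of_mem_cliqueOf (hrD : r ⊆ D) (hr : ¬ Sat q r) (ha : a ∈ r) (hb : b ∈ r)
    (hab : b ∈ cliqueOf l q D a) : keyEq l a b := by
  unfold cliqueOf at hab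
  split_ifs at hab with hclique
  · by_contra hkey
    rcases hclique a (self_mem_gComp (hrD ha)) b hab hkey with h | h
    exacts [hr ⟨a, b, h.of_subset ha hb⟩, hr ⟨b, a, h.of_subset hb ha⟩]
  · rw [Set.mem_singleton_iff.1 hab]
    exact keyEq_refl a

lemma CliqueDB.cliqueOf_eq_gComp (hD : CliqueDB l q D) (ha : a ∈ D) :
    cliqueOf l q D a = gComp q D a :=
  if_pos (hD a ha)

lemma CliqueDB.cliqueOf_eq_of_solSym (hD : CliqueDB l q D) (hx : x ∈ D) (hy : y ∈ D)
    (ha : a ∈ cliqueOf l q D x) (hb : b ∈ cliqueOf l q D y) (hab : SolSym q D a b) :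
    cliqueOf l q D x = cliqueOf l q D y := by
  rw [hD.cliqueOf_eq_gComp hx, hD.cliqueOf_eq_gComp hy] at *
  rw [gComp_eq_of_mem ha, gComp_eq_of_mem hb, gComp_eq_of_solSym hab]

lemma Repair.saturatingMatching_of_not_sat (hr : Repair l D r) (hsat : ¬ Sat q r) :
    SaturatingMatching l q D := by
  obtain ⟨hrD, hcons, hmeet⟩ := repair_iff.1 hr
  have hM : ∀ x ∈ D, ∃ a ∈ r, keyEq l x a ∧
      ⋃ c ∈ Block l D x ∩ r, cliqueOf l q D c = cliqueOf l q D a := by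
    intro x hx
    obtain ⟨a, ha, hxa⟩ := hmeet x hx
    have hsingle : Block l D x ∩ r = {a} := by
      ext c
      refine ⟨fun ⟨⟨_, hxc⟩, hc⟩ => hcons c hc a ha (hxc.symm.trans hxa), ?_⟩
      rintro rfl
      exact ⟨⟨hrD ha, hxa⟩, ha⟩
    exact ⟨a, ha, hxa, by rw [hsingle, Set.biUnion_singleton]⟩
  -- `B ∩ r` is a singleton for every block `B`: this is the clique of the fact of `r` in `B`.
  refine ⟨fun B => ⋃ c ∈ B ∩ r, cliqueOf l q D c, fun x hx => ?_, fun x hx y hy hxy => ?_⟩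
  · obtain ⟨a, ha, hxa, hMa⟩ := hM x hx
    refine ⟨⟨x, hx, rfl⟩, ⟨a, hrD ha, hMa⟩, a, ⟨hrD ha, hxa⟩, ?_,
      fun h => hsat ⟨a, a, h.of_subset ha ha⟩⟩
    beta_reduce
    exact hMa ▸ self_mem_cliqueOf (hrD ha)
  · beta_reduce at hxy
    obtain ⟨a, ha, hxa, hMa⟩ := hM x hx
    obtain ⟨b, hb, hyb, hMb⟩ := hM y hy
    have hba : b ∈ cliqueOf l q D a := by
      rw [← hMa, hxy, hMb]
      exact self_mem_cliqueOf (hrD hb)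
    rw [block_eq_of_keyEq hxa, block_eq_of_keyEq hyb]
    exact block_eq_of_keyEq (keyEq_of_mem_cliqueOf hrD hsat ha hb hba)

lemma CliqueDB.exists_repair_not_sat (hD : CliqueDB l q D) (hM : SaturatingMatching l q D) :
    ∃ r, Repair l D r ∧ ¬ Sat q r := by
  obtain ⟨M, hedge, hinj⟩ := hM
  obtain ⟨r, hr, hrM⟩ := exists_repair_of_forall_block
      (P := fun a => a ∈ M (Block l D a) ∧ ¬ Sol q D a a) fun x hx => by
    obtain ⟨-, -, a, ha, haM, hself⟩ := hedge x hx
    exact ⟨a, ha, block_eq_of_keyEq ha.2 ▸ haM, hself⟩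
  refine ⟨r, hr, fun ⟨a, b, hab⟩ => ?_⟩
  have hrD := hr.1
  have hsolD : Sol q D a b := ⟨hrD hab.1, hrD hab.2.1, hab.2.2⟩
  have hMab : M (Block l D a) = M (Block l D b) := by
    obtain ⟨-, ⟨x, hx, hMx⟩, -⟩ := hedge a (hrD hab.1)
    obtain ⟨-, ⟨y, hy, hMy⟩, -⟩ := hedge b (hrD hab.2.1)
    rw [hMx, hMy]
    exact hD.cliqueOf_eq_of_solSym hx hy (hMx ▸ (hrM a hab.1).1) (hMy ▸ (hrM b hab.2.1).1)
      (Or.inl hsolD)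
  obtain rfl : a = b := hr.2.1 a hab.1 b hab.2.1
    (keyEq_of_block_eq (hrD hab.2.1) (hinj a (hrD hab.1) b (hrD hab.2.1) hMab))
  exact (hrM a hab.1).2 hsolD

end CQA

theorem clique_query_certain_iff_no_matching_general (n l : ℕ)
    (Elem Var : Type)
    (q : CQA.Query n Var)
    (hcq : CQA.CliqueQuery l q Elem)
    (D : Set (Fin n → Elem)) (hD : D.Finite) :
    CQA.Certain l q D ↔ ¬ CQA.SaturatingMatching l q D := by
  constructor
  · intro hcert hM
    obtain ⟨r, hr, hsat⟩ := (hcq D hD).exists_repair_not_sat hM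
    exact hsat (hcert r hr)
  · intro hM r hr
    by_contra hsat
    exact hM (hr.saturatingMatching_of_not_sat hsat)

/-- for a 2way-determined clique-query, certainty coincides with the
non-existence of a saturating matching of `H(D,q)`, for every database. -/
theorem clique_query_certain_iff_no_matching (n l : ℕ) (hn : 1 ≤ n) (hl : l ≤ n)
    (Elem Var : Type) [Countable Elem] [Infinite Elem] [Countable Var] [Infinite Var]
    (q : CQA.Query n Var) (hq : CQA.TwoWayDet l q)
    (hcq : CQA.CliqueQuery l q Elem)
    (D : Set (Fin n → Elem)) (hD : D.Finite) :
    CQA.Certain l q D ↔ ¬ CQA.SaturatingMatching l q D :=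
  clique_query_certain_iff_no_matching_general n l Elem Var q hcq D hD
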